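/- Let S be a standard graded polynomial ring in n variables over an infinite field K with irrelevant maximal ideal m, and let M be a finitely generated graded S-module. Write D^i(M) = Ext_S^{n−i}(M, S), so that by graded local duality H^i_m(M) ≅ Hom_S(D^i(M), E(S/m)). If depth(D^i(M)) ≥ 1, then H^i_m(M) has no gaps and (H^i_m(M))_l ≠ 0 for every l ≤ end(H^i_m(M)). -/
import Mathlib


/- Preliminary definitions: graded modules over standard graded polynomial rings,
"end" of a graded module, no-gaps condition, module dimension and depth,
Castelnuovo-Mumford regularity computed from graded local cohomology data,
Segre product rings and Veronese subrings. -/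

open MvPolynomial TensorProduct DirectSum

noncomputable section

/-- `end` of a ℤ-graded module given by its family of graded pieces:
`end(N) = max {b : N_b ≠ 0}` (as a supremum in ℤ, with junk value if empty/unbounded). -/
def endDeg {K N : Type} [Field K] [AddCommGroup N] [Module K N]
    (𝓝 : ℤ → Submodule K N) : ℤ :=
  sSup {b : ℤ | 𝓝 b ≠ ⊥}

/-- A ℤ-graded module (given by its graded pieces) has no gaps: there are no
`i < j < k` with `N_i ≠ 0`, `N_k ≠ 0` and `N_j = 0`. -/
def NoGaps {K N : Type} [Field K] [AddCommGroup N] [Module K N]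
    (𝓝 : ℤ → Submodule K N) : Prop :=
  ∀ i j k : ℤ, i < j → j < k → 𝓝 i ≠ ⊥ → 𝓝 k ≠ ⊥ → 𝓝 j ≠ ⊥

/-- The (Krull) dimension of a module: the Krull dimension of `R ⧸ ann(M)`. -/
def moduleDim (R M : Type) [CommRing R] [AddCommGroup M] [Module R M] : WithBot (WithTop ℕ) :=
  ringKrullDim (R ⧸ Module.annihilator R M)

/-- `depth_I(M) ≥ k`: there exists an `M`-regular sequence of length `k` with entries in `I`. -/
def depthGE (R M : Type) [CommRing R] [AddCommGroup M] [Module R M]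
    (I : Ideal R) (k : ℕ) : Prop :=
  ∃ rs : List R, rs.length = k ∧ (∀ r ∈ rs, r ∈ I) ∧ RingTheory.Sequence.IsRegular M rs

/-- The irrelevant maximal ideal of the standard graded polynomial ring. -/
def irrIdeal (K : Type) [Field K] (ν : ℕ) : Ideal (MvPolynomial (Fin ν) K) :=
  Ideal.span (Set.range MvPolynomial.X)

/-- Compatibility of a ℤ-grading on a module with the standard grading of the polynomial
ring: homogeneous polynomials of degree `a` map the degree-`b` piece into the degree-`b+a`
piece.  Together with `DirectSum.Decomposition` this says the module is a graded module. -/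
def GrCompat {K : Type} [Field K] (ν : ℕ) {N : Type} [AddCommGroup N] [Module K N]
    [Module (MvPolynomial (Fin ν) K) N] (𝓝 : ℤ → Submodule K N) : Prop :=
  ∀ (a : ℕ) (p : MvPolynomial (Fin ν) K), p ∈ homogeneousSubmodule (Fin ν) K a →
    ∀ (b : ℤ), ∀ x ∈ 𝓝 b, p • x ∈ 𝓝 (b + a)

/-- The Castelnuovo–Mumford regularity computed from the graded pieces `𝓗 j` of the local
cohomology modules `H^j`:  `reg = max_j (end(H^j) + j)`, the max being over those `j`
with `H^j ≠ 0`. -/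
def regOf {K : Type} [Field K] {H : ℕ → Type} [∀ j, AddCommGroup (H j)] [∀ j, Module K (H j)]
    (𝓗 : ∀ j, ℤ → Submodule K (H j)) : ℤ :=
  sSup {r : ℤ | ∃ j : ℕ, (∃ b, 𝓗 j b ≠ ⊥) ∧ r = endDeg (𝓗 j) + (j : ℤ)}

/-- The "big" polynomial ring `S₁ ⊗ ⋯ ⊗ S_s`: the polynomial ring on the disjoint union
of the (pairwise disjoint) sets of variables of the rings `Sᵢ = K[x_{i,1},…,x_{i,νᵢ}]`. -/
abbrev BigP (K : Type) [Field K] {s : ℕ} (ν : Fin s → ℕ) : Type :=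
  MvPolynomial ((i : Fin s) × Fin (ν i)) K

/-- The degree-one generators `x_{1,f(1)} ⋯ x_{s,f(s)}` of the Segre product ring. -/
def segGens (K : Type) [Field K] {s : ℕ} (ν : Fin s → ℕ) : Set (BigP K ν) :=
  {p | ∃ f : ∀ i, Fin (ν i), p = ∏ i, MvPolynomial.X ⟨i, f i⟩}

/-- The Segre product `S₁ ⊗̲ ⋯ ⊗̲ S_s` of the polynomial rings, realized as the subalgebra
of `S₁ ⊗ ⋯ ⊗ S_s` generated by the products of one variable from each factor. -/
def SegreRing (K : Type) [Field K] {s : ℕ} (ν : Fin s → ℕ) : Subalgebra K (BigP K ν) :=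
  Algebra.adjoin K (segGens K ν)

/-- The irrelevant maximal ideal of the Segre product ring. -/
def irrSeg (K : Type) [Field K] {s : ℕ} (ν : Fin s → ℕ) : Ideal ↥(SegreRing K ν) :=
  Ideal.span {z | (z : BigP K ν) ∈ segGens K ν}

/-- Compatibility of a ℤ-grading with the grading of the Segre product ring, whose
degree-`a` elements are those that are homogeneous of total degree `s*a` in the ambient
polynomial ring. -/
def SegCompat (K : Type) [Field K] {s : ℕ} (ν : Fin s → ℕ) {N : Type} [AddCommGroup N]
    [Module K N] [Module ↥(SegreRing K ν) N] (𝓝 : ℤ → Submodule K N) : Prop :=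
  ∀ (a : ℕ) (g : ↥(SegreRing K ν)),
    (g : BigP K ν) ∈ homogeneousSubmodule ((i : Fin s) × Fin (ν i)) K (s * a) →
    ∀ (b : ℤ), ∀ x ∈ 𝓝 b, g • x ∈ 𝓝 (b + a)

/-- The support of a multi-index `u ∈ C`. -/
def Supp {s : ℕ} (u : Fin s → ℕ) : Finset (Fin s) := Finset.univ.filter fun i => u i ≠ 0

/-- Nonvanishing of the Segre product (over the index set `T`) of the graded modules
`G i (u i)`: the graded module `⨁_b ⨂_{i ∈ T} (G i (u i))_b` is nonzero. -/
def SegNZ {K : Type} [Field K] {s : ℕ} {G : Fin s → ℕ → Type}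
    [∀ i j, AddCommGroup (G i j)] [∀ i j, Module K (G i j)]
    (𝓖 : ∀ i j, ℤ → Submodule K (G i j)) (T : Finset (Fin s)) (u : Fin s → ℕ) : Prop :=
  Nontrivial (⨁ (b : ℤ), ⨂[K] (i : ↥T), ↥(𝓖 i.1 (u i.1) b))

/-- The `end` of the Segre product (over the index set `T`) of the graded modules
`G i (u i)`, i.e. the largest `b` with `⨂_{i ∈ T} (G i (u i))_b ≠ 0`. -/
def endSeg {K : Type} [Field K] {s : ℕ} {G : Fin s → ℕ → Type}
    [∀ i j, AddCommGroup (G i j)] [∀ i j, Module K (G i j)]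
    (𝓖 : ∀ i j, ℤ → Submodule K (G i j)) (T : Finset (Fin s)) (u : Fin s → ℕ) : ℤ :=
  sSup {b : ℤ | Nontrivial (⨂[K] (i : ↥T), ↥(𝓖 i.1 (u i.1) b))}

/-- `γ_u = 1 + Σ_{l ∈ Supp u} (u_l - 1) + min_{i ∈ Supp u} end(H^{u_i}_{m_i}(M_i))`. -/
def gammaOf {K : Type} [Field K] {s : ℕ} {G : Fin s → ℕ → Type}
    [∀ i j, AddCommGroup (G i j)] [∀ i j, Module K (G i j)]
    (𝓖 : ∀ i j, ℤ → Submodule K (G i j)) (u : Fin s → ℕ) : ℤ :=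
  1 + (∑ i ∈ Supp u, ((u i : ℤ) - 1)) +
    sInf {e : ℤ | ∃ i ∈ Supp u, e = endDeg (𝓖 i (u i))}

/-- The `n`-th Veronese subring `S^{<n>}` of the polynomial ring, generated by the
homogeneous polynomials of degree `n`. -/
def VerRing (K : Type) [Field K] (ν n : ℕ) : Subalgebra K (MvPolynomial (Fin ν) K) :=
  Algebra.adjoin K ((homogeneousSubmodule (Fin ν) K n : Submodule K (MvPolynomial (Fin ν) K)) : Set (MvPolynomial (Fin ν) K))

/-- The irrelevant maximal ideal of the Veronese subring. -/
def irrVer (K : Type) [Field K] (ν n : ℕ) : Ideal ↥(VerRing K ν n) :=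
  Ideal.span {z | (z : MvPolynomial (Fin ν) K) ∈ homogeneousSubmodule (Fin ν) K n}

/-- Compatibility of a ℤ-grading with the grading of the Veronese subring (whose degree-`a`
piece consists of the polynomials homogeneous of degree `n*a`). -/
def VerCompat (K : Type) [Field K] (ν n : ℕ) {N : Type} [AddCommGroup N] [Module K N]
    [Module ↥(VerRing K ν n) N] (𝓝 : ℤ → Submodule K N) : Prop :=
  ∀ (a : ℕ) (g : ↥(VerRing K ν n)),
    (g : MvPolynomial (Fin ν) K) ∈ homogeneousSubmodule (Fin ν) K (n * a) →
    ∀ (b : ℤ), ∀ x ∈ 𝓝 b, g • x ∈ 𝓝 (b + a)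

/-- Generators of the Segre product of the Veronese subrings `S₁^{<n₁>} ⊗̲ ⋯ ⊗̲ S_s^{<n_s>}`:
products `p₁ ⋯ p_s` where `pᵢ` is homogeneous of degree `nᵢ` in the variables of `Sᵢ`. -/
def segVerGens (K : Type) [Field K] {s : ℕ} (ν n : Fin s → ℕ) : Set (BigP K ν) :=
  {q | ∃ p : ∀ i, MvPolynomial (Fin (ν i)) K,
      (∀ i, p i ∈ homogeneousSubmodule (Fin (ν i)) K (n i)) ∧
      q = ∏ i, MvPolynomial.rename (fun x => (⟨i, x⟩ : (i : Fin s) × Fin (ν i))) (p i)}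

/-- The Segre product of the Veronese subrings, realized inside `S₁ ⊗ ⋯ ⊗ S_s`. -/
def SegVerRing (K : Type) [Field K] {s : ℕ} (ν n : Fin s → ℕ) : Subalgebra K (BigP K ν) :=
  Algebra.adjoin K (segVerGens K ν n)

/-- The irrelevant maximal ideal of the Segre product of the Veronese subrings. -/
def irrSegVer (K : Type) [Field K] {s : ℕ} (ν n : Fin s → ℕ) : Ideal ↥(SegVerRing K ν n) :=
  Ideal.span {z | (z : BigP K ν) ∈ segVerGens K ν n}

/-- Compatibility of a ℤ-grading with the grading of the Segre product of the Veronese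
subrings (whose degree-`a` piece consists of elements homogeneous of total degree
`(Σᵢ nᵢ) * a` in the ambient polynomial ring). -/
def SegVerCompat (K : Type) [Field K] {s : ℕ} (ν n : Fin s → ℕ) {N : Type} [AddCommGroup N]
    [Module K N] [Module ↥(SegVerRing K ν n) N] (𝓝 : ℤ → Submodule K N) : Prop :=
  ∀ (a : ℕ) (g : ↥(SegVerRing K ν n)),
    (g : BigP K ν) ∈ homogeneousSubmodule ((i : Fin s) × Fin (ν i)) K ((∑ i, n i) * a) →
    ∀ (b : ℤ), ∀ x ∈ 𝓝 b, g • x ∈ 𝓝 (b + a)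

/-- The squarefree monomial `x^F = ∏_{i ∈ F} x_i`. -/
def sfMonomial (K : Type) [Field K] {ν : ℕ} (F : Finset (Fin ν)) : MvPolynomial (Fin ν) K :=
  ∏ i ∈ F, MvPolynomial.X i

/-- The Stanley–Reisner ideal `I_Δ = (x^F : F ∉ Δ)` of a simplicial complex `Δ`. -/
def SRIdeal (K : Type) [Field K] {ν : ℕ} (Δ : Finset (Fin ν) → Prop) :
    Ideal (MvPolynomial (Fin ν) K) :=
  Ideal.span {p | ∃ F : Finset (Fin ν), ¬ Δ F ∧ p = sfMonomial K F}

/-- The Alexander dual `Δ*` of a simplicial complex `Δ` on `[n]`: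
`F ∈ Δ*` iff `[n] ∖ F ∉ Δ`. -/
def AlexDual {ν : ℕ} (Δ : Finset (Fin ν) → Prop) : Finset (Fin ν) → Prop :=
  fun F => ¬ Δ Fᶜ

end

/-- graded local duality and gaps.  Here `D = D^i(M) = Ext^{n-i}_S(M,S)`
(as an `S`-module, via Mathlib's `Ext`), with a grading, and `Hi ≅ H^i_m(M)` with a grading;
graded local duality `(H^i_m(M))_b ≅ Hom_K((D^i(M))_{-b-n}, K)` is the hypothesis `hdual`. -/
theorem statement_15
    (K : Type) [Field K] [Infinite K] (ν : ℕ)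
    -- the finitely generated graded module `M` over `S = K[x₁,…,x_ν]`
    (M : Type) [AddCommGroup M] [Module K M]
    [Module (MvPolynomial (Fin ν) K) M] [IsScalarTower K (MvPolynomial (Fin ν) K) M]
    (𝓜 : ℤ → Submodule K M) [DirectSum.Decomposition 𝓜]
    (hMgr : GrCompat ν 𝓜)
    (hMfg : Module.Finite (MvPolynomial (Fin ν) K) M)
    (i : ℕ) (hi : i ≤ ν)
    -- `D = Ext^{n-i}_S(M, S)`, with its grading
    (D : Type) [AddCommGroup D] [Module K D] [Module (MvPolynomial (Fin ν) K) D]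
    [IsScalarTower K (MvPolynomial (Fin ν) K) D]
    (hD : Nonempty (D ≃ₗ[MvPolynomial (Fin ν) K]
        (((Ext (MvPolynomial (Fin ν) K) (ModuleCat.{0} (MvPolynomial (Fin ν) K)) (ν - i)).obj
            (Opposite.op (ModuleCat.of (MvPolynomial (Fin ν) K) M))).obj
          (ModuleCat.of (MvPolynomial (Fin ν) K) (MvPolynomial (Fin ν) K)))))
    (𝓓 : ℤ → Submodule K D) [DirectSum.Decomposition 𝓓] (hDgr : GrCompat ν 𝓓)
    -- `Hi ≅ H^i_m(M)`, with its grading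
    (Hi : Type) [AddCommGroup Hi] [Module K Hi] [Module (MvPolynomial (Fin ν) K) Hi]
    [IsScalarTower K (MvPolynomial (Fin ν) K) Hi]
    (hHi : Nonempty (Hi ≃ₗ[MvPolynomial (Fin ν) K]
        ((localCohomology (irrIdeal K ν) i).obj (ModuleCat.of (MvPolynomial (Fin ν) K) M))))
    (𝓗 : ℤ → Submodule K Hi) [DirectSum.Decomposition 𝓗] (hHgr : GrCompat ν 𝓗)
    -- graded local duality: `(H^i_m(M))_b ≅ Hom_K((D^i(M))_{-b-n}, K)`
    (hdual : ∀ b : ℤ, Nonempty (↥(𝓗 b) ≃ₗ[K] Module.Dual K ↥(𝓓 (-b - (ν : ℤ)))))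
    -- the hypothesis `depth D^i(M) ≥ 1`
    (hdepthD : depthGE (MvPolynomial (Fin ν) K) D (irrIdeal K ν) 1)
    :
    NoGaps 𝓗 ∧ (∀ l : ℤ, l ≤ endDeg 𝓗 → 𝓗 l ≠ ⊥) := by
  classical
  obtain ⟨rs, hlen, hmemI, hreg⟩ := hdepthD
  obtain ⟨r, rfl⟩ := List.length_eq_one_iff.mp hlen
  have hr : r ∈ irrIdeal K ν := hmemI r (List.mem_singleton_self r)
  have hinj : IsSMulRegular D r :=
    ((RingTheory.Sequence.isRegular_cons_iff D r []).mp hreg).1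
  -- D is nontrivial
  have hDnt : Nontrivial D := by
    rcases subsingleton_or_nontrivial D with h | h
    · exact absurd (Subsingleton.elim _ _) hreg.top_ne_smul
    · exact h
  -- upward closure on the grading of D
  have hup : ∀ c : ℤ, 𝓓 c ≠ ⊥ → 𝓓 (c + 1) ≠ ⊥ := by
    intro c hc hcc
    apply hc
    rw [Submodule.eq_bot_iff] at hcc ⊢
    intro y hy
    have hzero : r • y = 0 := by
      refine Submodule.span_induction
        (p := fun p _ => p • y = (0 : D)) ?_ ?_ ?_ ?_ hr
      · rintro p ⟨j, rfl⟩
        have hXmem : (MvPolynomial.X j : MvPolynomial (Fin ν) K) ∈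
            homogeneousSubmodule (Fin ν) K 1 := by
          rw [mem_homogeneousSubmodule]
          exact MvPolynomial.isHomogeneous_X _ _
        have := hDgr 1 (MvPolynomial.X j) hXmem c y hy
        exact hcc _ (by simpa using this)
      · simp
      · intro p q _ _ hp hq
        rw [add_smul, hp, hq, add_zero]
      · intro a p _ hp
        rw [smul_eq_mul, mul_smul, hp, smul_zero]
    have : r • y = r • (0 : D) := by simpa using hzero
    exact hinj this
  -- transfer nonvanishing between 𝓗 and 𝓓 via duality
  have hiff : ∀ b : ℤ, 𝓗 b ≠ ⊥ ↔ 𝓓 (-b - (ν : ℤ)) ≠ ⊥ := by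
    intro b
    obtain ⟨e⟩ := hdual b
    rw [← Submodule.nontrivial_iff_ne_bot, ← Submodule.nontrivial_iff_ne_bot]
    constructor
    · intro h
      have : Nontrivial (Module.Dual K ↥(𝓓 (-b - (ν : ℤ)))) := Equiv.nontrivial e.symm.toEquiv
      obtain ⟨f, g, hfg⟩ := this
      by_contra hns
      rw [not_nontrivial_iff_subsingleton] at hns
      exact hfg (LinearMap.ext fun v => by rw [Subsingleton.elim v 0]; simp)
    · intro h
      have hnt : Nontrivial (Module.Dual K ↥(𝓓 (-b - (ν : ℤ)))) := by
        obtain ⟨v, w, hvw⟩ := h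
        have hv : v - w ≠ 0 := sub_ne_zero.mpr hvw
        obtain ⟨φ, hφ⟩ := not_forall.mp fun hall =>
          hv ((Module.forall_dual_apply_eq_zero_iff K (v - w)).mp hall)
        exact ⟨φ, 0, fun h0 => hφ (by rw [h0]; rfl)⟩
      exact Equiv.nontrivial e.toEquiv
  -- downward closure on the grading of H
  have hdown : ∀ b : ℤ, 𝓗 b ≠ ⊥ → 𝓗 (b - 1) ≠ ⊥ := by
    intro b hb
    rw [hiff] at hb ⊢
    have := hup _ hb
    have heq : -b - (ν : ℤ) + 1 = -(b - 1) - (ν : ℤ) := by ring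
    rwa [heq] at this
  have hdesc : ∀ (n : ℕ) (b : ℤ), 𝓗 b ≠ ⊥ → 𝓗 (b - n) ≠ ⊥ := by
    intro n
    induction n with
    | zero => intro b hb; simpa using hb
    | succ k ih =>
      intro b hb
      have := hdown _ (ih b hb)
      have heq : b - (k : ℤ) - 1 = b - ((k : ℕ) + 1 : ℕ) := by push_cast; ring
      rwa [heq] at this
  have hdownle : ∀ b : ℤ, 𝓗 b ≠ ⊥ → ∀ l : ℤ, l ≤ b → 𝓗 l ≠ ⊥ := by
    intro b hb l hl
    have := hdesc (b - l).toNat b hb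
    rwa [Int.toNat_of_nonneg (by omega), show b - (b - l) = l by ring] at this
  constructor
  · intro i j k _ hjk _ hk
    exact hdownle k hk j (le_of_lt hjk)
  · -- nonvanishing up to endDeg
    intro l hl
    -- the set of nonvanishing degrees of 𝓗 is nonempty
    have hSne : ∃ b : ℤ, 𝓗 b ≠ ⊥ := by
      -- some 𝓓 c ≠ ⊥ since D is nontrivial
      have hDc : ∃ c : ℤ, 𝓓 c ≠ ⊥ := by
        by_contra hall
        push_neg at hall
        have hsup : (⨆ c : ℤ, 𝓓 c) = ⊤ :=
          (DirectSum.Decomposition.isInternal 𝓓).submodule_iSup_eq_top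
        have hbot : (⨆ c : ℤ, 𝓓 c) = ⊥ := by simp [hall]
        obtain ⟨x, y, hxy⟩ := hDnt
        apply hxy
        have hx : x ∈ (⊥ : Submodule K D) := by rw [← hbot, hsup]; trivial
        have hy : y ∈ (⊥ : Submodule K D) := by rw [← hbot, hsup]; trivial
        rw [Submodule.mem_bot] at hx hy
        rw [hx, hy]
      obtain ⟨c, hc⟩ := hDc
      refine ⟨-c - (ν : ℤ), ?_⟩
      rw [hiff]
      rwa [show -(-c - (ν : ℤ)) - (ν : ℤ) = c by ring]
    by_cases hbdd : BddAbove {b : ℤ | 𝓗 b ≠ ⊥}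
    · obtain ⟨ub, hub⟩ := hbdd
      obtain ⟨g, hg, hgub⟩ := Int.exists_greatest_of_bdd
        (P := fun b => 𝓗 b ≠ ⊥) ⟨ub, fun z hz => hub hz⟩ hSne
      have hgr : IsGreatest {b : ℤ | 𝓗 b ≠ ⊥} g := ⟨hg, fun z hz => hgub z hz⟩
      have hsup : endDeg 𝓗 = g := hgr.csSup_eq
      exact hdownle g hg l (by rw [hsup] at hl; exact hl)
    · rw [not_bddAbove_iff] at hbdd
      obtain ⟨b, hb, hlb⟩ := hbdd l
      exact hdownle b hb l (le_of_lt hlb)
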